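/- arXiv:1003.4355 — 2 statements merged into one kernel-verified Lean document; each statement's English description precedes it below -/
import Mathlib

section
/- Let λ1, λ2 > 0, 0 ≤ ρ < 1, and let k be a natural number. Then the double integral R_k^1 := ∫_0^∞ ln(1+λ1 u) e^{-u/(1-ρ)} u^k ( ∫_0^{λ1 u / λ2} e^{-v/(1-ρ)} v^k dv ) du equals k! (1-ρ)^{k+1} F(λ1, k, 1/(1-ρ)) − k! Σ_{m=0}^{k} ((λ1/λ2)^m / m!) (1-ρ)^{k+1-m} F(λ1, k+m, (1 + λ1/λ2)/(1-ρ)). -/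
open MeasureTheory Real Set

/-- F(λ,k,μ) = ∫_0^∞ ln(1+λx) e^{-μx} x^k dx. -/
noncomputable def F (lam : ℝ) (k : ℕ) (μ : ℝ) : ℝ :=
  ∫ x in Ioi (0:ℝ), Real.log (1 + lam * x) * Real.exp (-μ * x) * x ^ k

/-!
The inner integral is an incomplete gamma integral: with `E_k(x) = ∑_{m ≤ k} x^m / m!` one has
`E_k' = E_k - x^k / k!`, so `-k! σ^(k+1) e^(-v/σ) E_k(v/σ)` is an antiderivative of `e^(-v/σ) v^k`
and `∫_0^T e^(-v/σ) v^k dv = k! σ^(k+1) (1 - e^(-T/σ) E_k(T/σ))`. Taking `T = (λ₁/λ₂) u`, the outer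
integrand becomes a finite linear combination of integrands of `F`, which are integrable because
`0 ≤ log (1 + λx) ≤ λx`; integrating term by term gives the formula.
-/

lemma integrableOn_pow_mul_exp_neg_mul (n : ℕ) {μ : ℝ} (hμ : 0 < μ) :
    IntegrableOn (fun x : ℝ => x ^ n * exp (-μ * x)) (Ioi 0) := by
  refine (integrableOn_rpow_mul_exp_neg_mul_rpow (s := n) (neg_one_lt_zero.trans_le n.cast_nonneg)
    one_pos hμ).congr_fun (fun x _ => ?_) measurableSet_Ioi
  simp only [rpow_natCast, rpow_one]

lemma integrableOn_log_one_add_mul_mul_exp_neg_mul_mul_pow {lam μ : ℝ} (hlam : 0 ≤ lam)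
    (hμ : 0 < μ) (n : ℕ) :
    IntegrableOn (fun x => log (1 + lam * x) * exp (-μ * x) * x ^ n) (Ioi 0) := by
  refine ((integrableOn_pow_mul_exp_neg_mul (n + 1) hμ).const_mul lam).mono' ?_ ?_
  · refine ContinuousOn.aestronglyMeasurable ?_ measurableSet_Ioi
    refine ContinuousOn.mul (ContinuousOn.mul (ContinuousOn.log (by fun_prop) fun x hx => ?_)
      (by fun_prop)) (by fun_prop)
    have : 0 < x := hx
    positivity
  · filter_upwards [ae_restrict_mem measurableSet_Ioi] with x (hx : 0 < x)
    have hlog_nonneg : 0 ≤ log (1 + lam * x) := log_nonneg (by nlinarith)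
    have hlog_le : log (1 + lam * x) ≤ lam * x := by
      linarith [log_le_sub_one_of_pos (show 0 < 1 + lam * x by nlinarith)]
    rw [Real.norm_of_nonneg (by positivity)]
    calc log (1 + lam * x) * exp (-μ * x) * x ^ n ≤ lam * x * exp (-μ * x) * x ^ n := by gcongr
      _ = lam * (x ^ (n + 1) * exp (-μ * x)) := by ring

lemma hasDerivAt_sum_range_pow_div_factorial (k : ℕ) (x : ℝ) :
    HasDerivAt (fun x : ℝ => ∑ m ∈ Finset.range (k + 1), x ^ m / (m.factorial : ℝ))
      (∑ m ∈ Finset.range k, x ^ m / (m.factorial : ℝ)) x := by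
  induction k with
  | zero => simpa using hasDerivAt_const x (1 : ℝ)
  | succ k ih =>
    rw [Finset.sum_range_succ _ k]
    simp_rw [Finset.sum_range_succ _ (k + 1)]
    refine ih.add ((hasDerivAt_pow (k + 1) x).div_const _) |>.congr_deriv ?_
    rw [Nat.factorial_succ]
    push_cast
    field_simp

lemma integral_exp_neg_div_mul_pow {σ : ℝ} (hσ : σ ≠ 0) (k : ℕ) (T : ℝ) :
    ∫ v in (0 : ℝ)..T, exp (-v / σ) * v ^ k =
      k.factorial * σ ^ (k + 1) *
        (1 - exp (-T / σ) * ∑ m ∈ Finset.range (k + 1), (T / σ) ^ m / m.factorial) := by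
  set E : ℝ → ℝ := fun x => ∑ m ∈ Finset.range (k + 1), x ^ m / m.factorial
  have hderiv : ∀ v, HasDerivAt (fun v => -(k.factorial * σ ^ (k + 1)) * (exp (-v / σ) * E (v / σ)))
      (exp (-v / σ) * v ^ k) v := by
    intro v
    have hexp : HasDerivAt (fun v => exp (-v / σ)) (exp (-v / σ) * (-1 / σ)) v := by
      simpa using ((hasDerivAt_id v).neg.div_const σ).exp
    have hE : HasDerivAt (fun v => E (v / σ))
        ((E (v / σ) - (v / σ) ^ k / k.factorial) * (1 / σ)) v := by
      refine ((hasDerivAt_sum_range_pow_div_factorial k (v / σ)).comp v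
        ((hasDerivAt_id v).div_const σ)).congr_deriv ?_
      simp only [E, Finset.sum_range_succ, add_sub_cancel_right]
    refine ((hexp.mul hE).const_mul _).congr_deriv ?_
    rw [div_pow]
    field_simp
    ring
  rw [intervalIntegral.integral_eq_sub_of_hasDerivAt (fun v _ => hderiv v)
    (by apply Continuous.intervalIntegrable; fun_prop)]
  have hE0 : E 0 = 1 := by simp [E, Finset.sum_range_succ']
  simp only [neg_zero, zero_div, exp_zero, hE0]
  ring

lemma mul_integral_exp_neg_div_mul_pow (a r u : ℝ) {σ : ℝ} (hσ : σ ≠ 0) (k : ℕ) :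
    a * exp (-u / σ) * u ^ k * ∫ v in (0 : ℝ)..r * u, exp (-v / σ) * v ^ k =
      k.factorial * σ ^ (k + 1) * (a * exp (-(1 / σ) * u) * u ^ k) -
        k.factorial * ∑ m ∈ Finset.range (k + 1),
          r ^ m / m.factorial * σ ^ (k + 1 - m) * (a * exp (-((1 + r) / σ) * u) * u ^ (k + m)) := by
  have hexp : exp (-((1 + r) / σ) * u) = exp (-u / σ) * exp (-(r * u) / σ) := by
    rw [← exp_add]
    ring_nf
  rw [integral_exp_neg_div_mul_pow hσ, hexp, show -(1 / σ) * u = -u / σ by ring, mul_sub, mul_sub]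
  congr 1
  · ring
  · simp only [Finset.mul_sum]
    refine Finset.sum_congr rfl fun m hm => ?_
    rw [div_pow, ← pow_sub_mul_pow σ (Finset.mem_range_succ_iff.mp hm |>.trans k.le_succ)]
    field_simp
    ring

theorem Rk1_eval_general (lam1 lam2 ρ : ℝ) (k : ℕ) (hlam1 : 0 < lam1) (hlam2 : 0 < lam2)
    (hρ1 : ρ < 1) :
    (∫ u in Ioi (0:ℝ), Real.log (1 + lam1 * u) * Real.exp (-u / (1 - ρ)) * u ^ k *
        ∫ v in (0:ℝ)..(lam1 * u / lam2), Real.exp (-v / (1 - ρ)) * v ^ k) =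
      (k.factorial : ℝ) * (1 - ρ) ^ (k + 1) * F lam1 k (1 / (1 - ρ)) -
        (k.factorial : ℝ) * ∑ m ∈ Finset.range (k + 1),
          ((lam1 / lam2) ^ m / (m.factorial : ℝ)) * (1 - ρ) ^ (k + 1 - m) *
            F lam1 (k + m) ((1 + lam1 / lam2) / (1 - ρ)) := by
  have hσ : 0 < 1 - ρ := sub_pos.mpr hρ1
  have hint (n : ℕ) {μ : ℝ} (hμ : 0 < μ) :=
    integrableOn_log_one_add_mul_mul_exp_neg_mul_mul_pow hlam1.le hμ n
  have hint_sum (m : ℕ) :=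
    (hint (k + m) (by positivity : 0 < (1 + lam1 / lam2) / (1 - ρ))).const_mul
      ((lam1 / lam2) ^ m / m.factorial * (1 - ρ) ^ (k + 1 - m))
  simp_rw [mul_div_right_comm lam1, mul_integral_exp_neg_div_mul_pow _ _ _ hσ.ne' k]
  rw [integral_sub ((hint k (one_div_pos.mpr hσ)).const_mul _)
      ((integrable_finsetSum _ fun m _ => hint_sum m).const_mul _),
    integral_const_mul, integral_const_mul, integral_finsetSum _ fun m _ => hint_sum m]
  simp only [integral_const_mul, F]

/-- evaluation of the double integral R_k^1. -/
theorem Rk1_eval (lam1 lam2 ρ : ℝ) (k : ℕ) (hlam1 : 0 < lam1) (hlam2 : 0 < lam2)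
    (hρ0 : 0 ≤ ρ) (hρ1 : ρ < 1) :
    (∫ u in Ioi (0:ℝ), Real.log (1 + lam1 * u) * Real.exp (-u / (1 - ρ)) * u ^ k *
        ∫ v in (0:ℝ)..(lam1 * u / lam2), Real.exp (-v / (1 - ρ)) * v ^ k) =
      (k.factorial : ℝ) * (1 - ρ) ^ (k + 1) * F lam1 k (1 / (1 - ρ)) -
        (k.factorial : ℝ) * ∑ m ∈ Finset.range (k + 1),
          ((lam1 / lam2) ^ m / (m.factorial : ℝ)) * (1 - ρ) ^ (k + 1 - m) *
            F lam1 (k + m) ((1 + lam1 / lam2) / (1 - ρ)) :=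
  Rk1_eval_general lam1 lam2 ρ k hlam1 hlam2 hρ1
end

section
/- (Theorem 1) Let λ1, λ2 > 0 and 0 ≤ ρ < 1. The average secrecy capacity over the correlated Rayleigh fading wiretap channel is C_s = ∫_0^∞ ∫_0^∞ max(ln(1+α) − ln(1+β), 0) f(α,β) dα dβ = Σ_{k=0}^∞ c_k [ k! (1-ρ)^{k+1} F(λ1, k, 1/(1-ρ)) − k! Σ_{m=0}^{k} ((λ1/λ2)^m / m!) (1-ρ)^{k+1-m} F(λ1, k+m, (1 + λ1/λ2)/(1-ρ)) − k! Σ_{m=0}^{k} ((λ2/λ1)^m / m!) (1-ρ)^{k+1-m} F(λ2, k+m, (1 + λ2/λ1)/(1-ρ)) ]. -/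
open MeasureTheory Real Set

/-!
Expand the joint density into its series: the `k`-th term is a nonnegative constant times the
product kernel `exp (-p α) α ^ k * exp (-q β) β ^ k` with `p = 1 / (λ₁ (1 - ρ))`,
`q = 1 / (λ₂ (1 - ρ))`. Since `0 ≤ C_s(α, β) ≤ α`, the double integrals of `α` times these terms
form a summable majorant, so the series may be integrated term by term.

For a single term, `C_s(α, β)` vanishes unless `α > β`, where it is `ln (1 + α) - ln (1 + β)`.
The part with `ln (1 + α)` is integrated over the triangle `β < α` by Fubini, the one with
`ln (1 + β)` directly; both leave the incomplete Gamma integral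
`∫ₓ^∞ e^{-qt} t^k dt = e^{-qx} ∑_{m ≤ k} k!/m! x^m / q^{k+1-m}` against `ln (1 + x) e^{-px} x^k`,
and the substitution `x ↦ λ x` turns the resulting integrals into values of `F`.
-/

open Filter Topology
open scoped Nat

/-- Closed form of `∫ t in Ioi x, exp (-q t) t ^ k` (see `integral_exp_neg_mul_mul_pow_Ioi`). -/
noncomputable def expPowTail (q : ℝ) (k : ℕ) (x : ℝ) : ℝ :=
  exp (-q * x) * ∑ m ∈ Finset.range (k + 1), (k ! / m ! : ℝ) * x ^ m / q ^ (k + 1 - m)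

section ExpPowTail

variable {q : ℝ}

lemma expPowTail_succ (hq : q ≠ 0) (k : ℕ) (x : ℝ) :
    expPowTail q (k + 1) x = (exp (-q * x) * x ^ (k + 1) + (k + 1) * expPowTail q k x) / q := by
  have hterm : ∀ m ∈ Finset.range (k + 1),
      ((k + 1)! / m ! : ℝ) * x ^ m / q ^ (k + 1 + 1 - m) =
        (k + 1) / q * ((k ! / m ! : ℝ) * x ^ m / q ^ (k + 1 - m)) := by
    intro m hm
    rw [show k + 1 + 1 - m = k + 1 - m + 1 by grind, pow_succ, Nat.factorial_succ]
    push_cast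
    field_simp
  rw [expPowTail, Finset.sum_range_succ, Finset.sum_congr rfl hterm, ← Finset.mul_sum, expPowTail,
    Nat.add_sub_cancel_left, div_self (Nat.cast_ne_zero.2 (Nat.factorial_ne_zero _)), one_mul,
    pow_one]
  ring

lemma expPowTail_apply_zero (hq : q ≠ 0) (k : ℕ) : expPowTail q k 0 = k ! / q ^ (k + 1) := by
  induction k with
  | zero => simp [expPowTail]
  | succ k ih =>
    rw [expPowTail_succ hq, ih, Nat.factorial_succ]
    push_cast
    field_simp
    ring

lemma hasDerivAt_expPowTail (hq : q ≠ 0) (k : ℕ) (x : ℝ) :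
    HasDerivAt (expPowTail q k) (-(exp (-q * x) * x ^ k)) x := by
  have hexp : HasDerivAt (fun x => exp (-q * x)) (exp (-q * x) * -q) x :=
    ((hasDerivAt_id x).const_mul (-q)).exp.congr_deriv (by simp)
  induction k with
  | zero =>
    have : expPowTail q 0 = fun x => exp (-q * x) / q := by ext; simp [expPowTail, div_eq_mul_inv]
    rw [this]
    exact (hexp.div_const q).congr_deriv (by field_simp)
  | succ k ih =>
    rw [show expPowTail q (k + 1) = _ from funext (expPowTail_succ hq k)]
    refine (((hexp.fun_mul (hasDerivAt_pow (k + 1) x)).fun_add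
      (ih.const_mul ((k : ℝ) + 1))).div_const q).congr_deriv ?_
    push_cast
    field_simp
    ring

lemma tendsto_exp_neg_mul_mul_pow_atTop (hq : 0 < q) (n : ℕ) :
    Tendsto (fun x => exp (-q * x) * x ^ n) atTop (𝓝 0) := by
  simpa [mul_comm, rpow_natCast] using tendsto_rpow_mul_exp_neg_mul_atTop_nhds_zero n q hq

lemma tendsto_expPowTail_atTop (hq : 0 < q) (k : ℕ) : Tendsto (expPowTail q k) atTop (𝓝 0) := by
  induction k with
  | zero =>
    have : expPowTail q 0 = fun x => exp (-q * x) * x ^ 0 / q := by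
      ext; simp [expPowTail, div_eq_mul_inv]
    simpa [this] using (tendsto_exp_neg_mul_mul_pow_atTop hq 0).div_const q
  | succ k ih =>
    rw [show expPowTail q (k + 1) = _ from funext (expPowTail_succ hq.ne' k)]
    simpa using ((tendsto_exp_neg_mul_mul_pow_atTop hq (k + 1)).add
      (ih.const_mul ((k : ℝ) + 1))).div_const q

lemma integrableOn_exp_neg_mul_mul_pow_Ioi (hq : 0 < q) (k : ℕ) {c : ℝ} (hc : 0 ≤ c) :
    IntegrableOn (fun x => exp (-q * x) * x ^ k) (Ioi c) :=
  integrableOn_Ioi_deriv_of_nonneg'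
    (fun x _ => by simpa using (hasDerivAt_expPowTail hq.ne' k x).fun_neg)
    (fun x hx => by have : 0 < x := hc.trans_lt hx; positivity)
    (tendsto_expPowTail_atTop hq k).neg

lemma integral_exp_neg_mul_mul_pow_Ioi (hq : 0 < q) (k : ℕ) {c : ℝ} (hc : 0 ≤ c) :
    ∫ x in Ioi c, exp (-q * x) * x ^ k = expPowTail q k c := by
  rw [integral_Ioi_of_hasDerivAt_of_tendsto'
    (fun x _ => by simpa using (hasDerivAt_expPowTail hq.ne' k x).fun_neg)
    (integrableOn_exp_neg_mul_mul_pow_Ioi hq k hc) (tendsto_expPowTail_atTop hq k).neg]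
  simp

lemma integral_exp_neg_mul_mul_pow_Ioi_zero (hq : 0 < q) (k : ℕ) :
    ∫ x in Ioi 0, exp (-q * x) * x ^ k = k ! / q ^ (k + 1) := by
  rw [integral_exp_neg_mul_mul_pow_Ioi hq k le_rfl, expPowTail_apply_zero hq.ne']

lemma integral_exp_neg_mul_mul_pow_Ioo (hq : 0 < q) (k : ℕ) {c : ℝ} (hc : 0 ≤ c) :
    ∫ x in Ioo 0 c, exp (-q * x) * x ^ k = expPowTail q k 0 - expPowTail q k c := by
  rw [← integral_Ioc_eq_integral_Ioo, ← intervalIntegral.integral_of_le hc,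
    intervalIntegral.integral_eq_sub_of_hasDerivAt
      (fun x _ => by simpa using (hasDerivAt_expPowTail hq.ne' k x).fun_neg)
      ((by fun_prop : Continuous fun x => exp (-q * x) * x ^ k).intervalIntegrable _ _)]
  ring

lemma exp_neg_mul_mul_pow_le (hq : 0 < q) {x : ℝ} (hx : 0 ≤ x) (k : ℕ) :
    exp (-q * x) * x ^ k ≤ k ! / q ^ k :=
  calc exp (-q * x) * x ^ k = (q * x) ^ k / k ! * exp (-(q * x)) * (k ! / q ^ k) := by
        field_simp
        ring_nf
    _ ≤ exp (q * x) * exp (-(q * x)) * (k ! / q ^ k) := by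
        gcongr
        exact pow_div_factorial_le_exp _ (by positivity) k
    _ = k ! / q ^ k := by rw [← exp_add, add_neg_cancel, exp_zero, one_mul]

end ExpPowTail

lemma integrableOn_log_one_add_mul_exp_neg_mul_pow {q : ℝ} (hq : 0 < q) (n : ℕ) :
    IntegrableOn (fun x => log (1 + x) * (exp (-q * x) * x ^ n)) (Ioi 0) := by
  refine (integrableOn_exp_neg_mul_mul_pow_Ioi hq (n + 1) le_rfl).mono' (by fun_prop) ?_
  refine ae_restrict_of_forall_mem measurableSet_Ioi fun x (hx : 0 < x) => ?_
  have hlog : log (1 + x) ≤ x := by linarith [log_le_sub_one_of_pos (by linarith : 0 < 1 + x)]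
  rw [norm_of_nonneg (mul_nonneg (log_nonneg (by linarith)) (by positivity)), pow_succ]
  calc log (1 + x) * (exp (-q * x) * x ^ n) ≤ x * (exp (-q * x) * x ^ n) := by gcongr
    _ = exp (-q * x) * (x ^ n * x) := by ring

lemma integral_log_one_add_mul_exp_neg_mul_pow_eq_F {lam : ℝ} (hlam : 0 < lam) (μ : ℝ) (n : ℕ) :
    ∫ x in Ioi 0, log (1 + x) * (exp (-μ * x) * x ^ n) = lam ^ (n + 1) * F lam n (μ * lam) := by
  have h := integral_comp_mul_left_Ioi (fun x => log (1 + x) * (exp (-μ * x) * x ^ n)) 0 hlam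
  simp only [mul_zero, smul_eq_mul] at h
  calc ∫ x in Ioi 0, log (1 + x) * (exp (-μ * x) * x ^ n)
      = lam * ∫ x in Ioi 0, log (1 + lam * x) * (exp (-μ * (lam * x)) * (lam * x) ^ n) := by
        rw [h, mul_inv_cancel_left₀ hlam.ne']
    _ = lam * ∫ x in Ioi 0, lam ^ n * (log (1 + lam * x) * exp (-(μ * lam) * x) * x ^ n) := by
        congr 1
        refine integral_congr_ae (ae_of_all _ fun x => ?_)
        simp only [show -μ * (lam * x) = -(μ * lam) * x by ring]
        ring
    _ = lam ^ (n + 1) * F lam n (μ * lam) := by rw [integral_const_mul, F]; ring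

noncomputable def secrecyCapacity (α β : ℝ) : ℝ := max (log (1 + α) - log (1 + β)) 0

lemma secrecyCapacity_nonneg (α β : ℝ) : 0 ≤ secrecyCapacity α β := le_max_right _ _

lemma secrecyCapacity_le {α β : ℝ} (hα : 0 ≤ α) (hβ : 0 ≤ β) : secrecyCapacity α β ≤ α := by
  refine max_le ?_ hα
  linarith [log_le_sub_one_of_pos (by linarith : 0 < 1 + α), log_nonneg (by linarith : 1 ≤ 1 + β)]

lemma integral_secrecyCapacity_mul {β : ℝ} (hβ : 0 ≤ β) {g : ℝ → ℝ}
    (hg : IntegrableOn g (Ioi β)) (hlog : IntegrableOn (fun α => log (1 + α) * g α) (Ioi β)) :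
    ∫ α in Ioi 0, secrecyCapacity α β * g α =
      (∫ α in Ioi β, log (1 + α) * g α) - log (1 + β) * ∫ α in Ioi β, g α := by
  have hsplit : EqOn (fun α => secrecyCapacity α β * g α)
      ((Ioi β).indicator fun α => (log (1 + α) - log (1 + β)) * g α) (Ioi 0) := by
    intro α (hα : 0 < α)
    by_cases hαβ : β < α
    · have : log (1 + β) ≤ log (1 + α) := log_le_log (by linarith) (by linarith)
      simp [hαβ, secrecyCapacity, max_eq_left (sub_nonneg.2 this)]
    · have : log (1 + α) ≤ log (1 + β) := log_le_log (by linarith) (by linarith)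
      simp [hαβ, secrecyCapacity, max_eq_right (sub_nonpos.2 this)]
  rw [setIntegral_congr_fun measurableSet_Ioi hsplit, integral_indicator measurableSet_Ioi,
    Measure.restrict_restrict measurableSet_Ioi, inter_eq_left.2 (Ioi_subset_Ioi hβ)]
  simp_rw [sub_mul]
  rw [integral_sub hlog (hg.const_mul _), integral_const_mul]

section Triangle

variable {f g : ℝ → ℝ} {a : ℝ}

lemma integral_Ioi_indicator_lt_mul {y : ℝ} (hy : a ≤ y) :
    ∫ x in Ioi a, {z : ℝ × ℝ | z.1 < z.2}.indicator (fun z => f z.1 * g z.2) (y, x) =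
      f y * ∫ x in Ioi y, g x := by
  have : (fun x => {z : ℝ × ℝ | z.1 < z.2}.indicator (fun z => f z.1 * g z.2) (y, x)) =
      (Ioi y).indicator fun x => f y * g x := by
    ext x
    by_cases h : y < x <;> simp [h]
  rw [this, integral_indicator measurableSet_Ioi, Measure.restrict_restrict measurableSet_Ioi,
    inter_eq_left.2 (Ioi_subset_Ioi hy), integral_const_mul]

lemma integrable_indicator_lt_mul_prod (hf : IntegrableOn f (Ioi a)) (hg : IntegrableOn g (Ioi a)) :
    Integrable ({z : ℝ × ℝ | z.1 < z.2}.indicator fun z => f z.1 * g z.2)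
      ((volume.restrict (Ioi a)).prod (volume.restrict (Ioi a))) :=
  (hf.mul_prod hg).indicator (measurableSet_lt measurable_fst measurable_snd)

lemma integrableOn_mul_integral_Ioi (hf : IntegrableOn f (Ioi a)) (hg : IntegrableOn g (Ioi a)) :
    IntegrableOn (fun y => f y * ∫ x in Ioi y, g x) (Ioi a) :=
  (integrable_indicator_lt_mul_prod hf hg).integral_prod_left.congr <|
    ae_restrict_of_forall_mem measurableSet_Ioi fun _ hy => integral_Ioi_indicator_lt_mul hy.le

lemma integral_mul_integral_Ioi (hf : IntegrableOn f (Ioi a)) (hg : IntegrableOn g (Ioi a)) :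
    ∫ y in Ioi a, f y * ∫ x in Ioi y, g x = ∫ x in Ioi a, g x * ∫ y in Ioo a x, f y := by
  set H := {z : ℝ × ℝ | z.1 < z.2}.indicator fun z => f z.1 * g z.2
  calc ∫ y in Ioi a, f y * ∫ x in Ioi y, g x = ∫ y in Ioi a, ∫ x in Ioi a, H (y, x) :=
        setIntegral_congr_fun measurableSet_Ioi fun y hy =>
          (integral_Ioi_indicator_lt_mul (le_of_lt hy)).symm
    _ = ∫ x in Ioi a, ∫ y in Ioi a, H (y, x) :=
        integral_integral_swap (integrable_indicator_lt_mul_prod hf hg)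
    _ = ∫ x in Ioi a, g x * ∫ y in Ioo a x, f y := by
        refine setIntegral_congr_fun measurableSet_Ioi fun x _ => ?_
        have : (fun y => H (y, x)) = (Iio x).indicator fun y => f y * g x := by
          ext y
          by_cases h : y < x <;> simp [H, h]
        rw [this, integral_indicator measurableSet_Iio, Measure.restrict_restrict measurableSet_Iio,
          Iio_inter_Ioi, integral_mul_const, mul_comm]

end Triangle

lemma integral_tsum_of_nonneg_of_le {X ι : Type*} [MeasurableSpace X] [Countable ι] {μ : Measure X}
    {f h : ι → X → ℝ} (hf : ∀ i, AEStronglyMeasurable (f i) μ) (hf_nonneg : ∀ i, 0 ≤ᵐ[μ] f i)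
    (hfh : ∀ i, f i ≤ᵐ[μ] h i) (hh : ∀ i, Integrable (h i) μ)
    (hsum : Summable fun i => ∫ x, h i x ∂μ) :
    ∫ x, ∑' i, f i x ∂μ = ∑' i, ∫ x, f i x ∂μ := by
  have hnorm : ∀ i, (fun x => ‖f i x‖) ≤ᵐ[μ] h i := fun i => by
    filter_upwards [hf_nonneg i, hfh i] with x h0 h1
    rwa [norm_of_nonneg h0]
  have hf_int : ∀ i, Integrable (f i) μ := fun i => (hh i).mono' (hf i) (hnorm i)
  refine (integral_tsum_of_summable_integral_norm hf_int ?_).symm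
  exact hsum.of_nonneg_of_le (fun i => integral_nonneg fun _ => norm_nonneg _)
    (fun i => integral_mono_ae (hf_int i).norm (hh i) (hnorm i))

section PerTerm

variable {p q : ℝ}

lemma log_one_add_mul_expPowTail_mul (r s : ℝ) (k : ℕ) (x : ℝ) :
    log (1 + x) * (expPowTail r k x * (exp (-s * x) * x ^ k)) =
      ∑ m ∈ Finset.range (k + 1), (k ! / m ! : ℝ) / r ^ (k + 1 - m) *
        (log (1 + x) * (exp (-(r + s) * x) * x ^ (k + m))) := by
  simp only [expPowTail, Finset.sum_mul, Finset.mul_sum]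
  refine Finset.sum_congr rfl fun m _ => ?_
  rw [show -(r + s) * x = -r * x + -s * x by ring, exp_add]
  ring

lemma integrableOn_log_one_add_mul_expPowTail_mul {r s : ℝ} (hr : 0 < r) (hs : 0 < s) (k : ℕ) :
    IntegrableOn (fun x => log (1 + x) * (expPowTail r k x * (exp (-s * x) * x ^ k))) (Ioi 0) := by
  simp_rw [log_one_add_mul_expPowTail_mul]
  exact integrable_finsetSum _ fun m _ =>
    (integrableOn_log_one_add_mul_exp_neg_mul_pow (by positivity) _).const_mul _

lemma integral_log_one_add_mul_expPowTail_mul {r s : ℝ} (hr : 0 < r) (hs : 0 < s) (k : ℕ) :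
    ∫ x in Ioi 0, log (1 + x) * (expPowTail r k x * (exp (-s * x) * x ^ k)) =
      ∑ m ∈ Finset.range (k + 1), (k ! / m ! : ℝ) / r ^ (k + 1 - m) *
        ∫ x in Ioi 0, log (1 + x) * (exp (-(r + s) * x) * x ^ (k + m)) := by
  simp_rw [log_one_add_mul_expPowTail_mul]
  rw [integral_finsetSum _ fun m _ =>
    (integrableOn_log_one_add_mul_exp_neg_mul_pow (by positivity) _).const_mul _]
  simp_rw [integral_const_mul]

lemma integral_secrecyCapacity_mul_exp_pow (hp : 0 < p) {β : ℝ} (hβ : 0 ≤ β) (k : ℕ) :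
    ∫ α in Ioi 0, secrecyCapacity α β * (exp (-p * α) * α ^ k * (exp (-q * β) * β ^ k)) =
      exp (-q * β) * β ^ k * (∫ α in Ioi β, log (1 + α) * (exp (-p * α) * α ^ k))
        - log (1 + β) * (expPowTail p k β * (exp (-q * β) * β ^ k)) := by
  have hassoc : ∀ α, secrecyCapacity α β * (exp (-p * α) * α ^ k * (exp (-q * β) * β ^ k)) =
      secrecyCapacity α β * (exp (-p * α) * α ^ k) * (exp (-q * β) * β ^ k) :=
    fun α => (mul_assoc _ _ _).symm
  rw [integral_congr_ae (ae_of_all _ hassoc), integral_mul_const,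
    integral_secrecyCapacity_mul hβ
      ((integrableOn_exp_neg_mul_mul_pow_Ioi hp k le_rfl).mono_set (Ioi_subset_Ioi hβ))
      ((integrableOn_log_one_add_mul_exp_neg_mul_pow hp k).mono_set (Ioi_subset_Ioi hβ)),
    integral_exp_neg_mul_mul_pow_Ioi hp k hβ]
  ring

lemma integral_integral_secrecyCapacity_mul (hp : 0 < p) (hq : 0 < q) (k : ℕ) :
    ∫ β in Ioi 0, ∫ α in Ioi 0,
        secrecyCapacity α β * (exp (-p * α) * α ^ k * (exp (-q * β) * β ^ k)) =
      k ! / q ^ (k + 1) * (∫ x in Ioi 0, log (1 + x) * (exp (-p * x) * x ^ k))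
        - (∫ x in Ioi 0, log (1 + x) * (expPowTail q k x * (exp (-p * x) * x ^ k)))
        - ∫ x in Ioi 0, log (1 + x) * (expPowTail p k x * (exp (-q * x) * x ^ k)) := by
  have hEq := integrableOn_exp_neg_mul_mul_pow_Ioi hq k le_rfl
  have hLEp := integrableOn_log_one_add_mul_exp_neg_mul_pow hp k
  calc _ = ∫ β in Ioi 0, (exp (-q * β) * β ^ k *
          (∫ α in Ioi β, log (1 + α) * (exp (-p * α) * α ^ k))
          - log (1 + β) * (expPowTail p k β * (exp (-q * β) * β ^ k))) :=
        setIntegral_congr_fun measurableSet_Ioi fun β (hβ : 0 < β) =>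
          integral_secrecyCapacity_mul_exp_pow hp hβ.le k
    _ = (∫ α in Ioi 0, log (1 + α) * (exp (-p * α) * α ^ k) *
            ∫ β in Ioo 0 α, exp (-q * β) * β ^ k)
          - ∫ β in Ioi 0, log (1 + β) * (expPowTail p k β * (exp (-q * β) * β ^ k)) := by
        rw [integral_sub (integrableOn_mul_integral_Ioi hEq hLEp)
          (integrableOn_log_one_add_mul_expPowTail_mul hp hq k), integral_mul_integral_Ioi hEq hLEp]
    _ = _ := by
        congr 1
        rw [← integral_const_mul, ← integral_sub (hLEp.const_mul _)
          (integrableOn_log_one_add_mul_expPowTail_mul hq hp k)]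
        refine setIntegral_congr_fun measurableSet_Ioi fun α (hα : 0 < α) => ?_
        rw [integral_exp_neg_mul_mul_pow_Ioo hq k hα.le, expPowTail_apply_zero hq.ne']
        ring

end PerTerm

section Interchange

variable {p q : ℝ}

lemma secrecyCapacity_mul_le {α β : ℝ} (hα : 0 ≤ α) (hβ : 0 ≤ β) (k : ℕ) :
    secrecyCapacity α β * (exp (-p * α) * α ^ k * (exp (-q * β) * β ^ k)) ≤
      exp (-q * β) * β ^ k * (exp (-p * α) * α ^ (k + 1)) :=
  calc _ ≤ α * (exp (-p * α) * α ^ k * (exp (-q * β) * β ^ k)) := by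
        gcongr
        exact secrecyCapacity_le hα hβ
    _ = _ := by ring

lemma integral_secrecyCapacity_mul_le (hp : 0 < p) {β : ℝ} (hβ : 0 ≤ β) (k : ℕ) :
    ∫ α in Ioi 0, secrecyCapacity α β * (exp (-p * α) * α ^ k * (exp (-q * β) * β ^ k)) ≤
      exp (-q * β) * β ^ k * ((k + 1)! / p ^ (k + 2)) := by
  rw [← integral_exp_neg_mul_mul_pow_Ioi_zero hp, ← integral_const_mul]
  refine integral_mono_of_nonneg
    (ae_restrict_of_forall_mem measurableSet_Ioi fun α (hα : 0 < α) => ?_)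
    ((integrableOn_exp_neg_mul_mul_pow_Ioi hp (k + 1) le_rfl).const_mul _)
    (ae_restrict_of_forall_mem measurableSet_Ioi fun α (hα : 0 < α) =>
      secrecyCapacity_mul_le hα.le hβ k)
  exact mul_nonneg (secrecyCapacity_nonneg α β) (by positivity)

lemma measurable_secrecyCapacity_mul (p q : ℝ) (k : ℕ) :
    Measurable fun z : ℝ × ℝ =>
      secrecyCapacity z.2 z.1 * (exp (-p * z.2) * z.2 ^ k * (exp (-q * z.1) * z.1 ^ k)) := by
  unfold secrecyCapacity
  fun_prop

variable {a : ℕ → ℝ}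

/-- `hsum` says that the majorants `α * a k * exp (-p α) α ^ k * exp (-q β) β ^ k` of the terms
have summable double integrals. -/
lemma integral_secrecyCapacity_mul_tsum (hp : 0 < p) (hq : 0 < q) (ha : ∀ k, 0 ≤ a k)
    (hsum : Summable fun k => a k * (k ! / q ^ (k + 1) * ((k + 1)! / p ^ (k + 2))))
    {β : ℝ} (hβ : 0 < β) :
    ∫ α in Ioi 0, secrecyCapacity α β *
        ∑' k, a k * (exp (-p * α) * α ^ k * (exp (-q * β) * β ^ k)) =
      ∑' k, a k * ∫ α in Ioi 0,
        secrecyCapacity α β * (exp (-p * α) * α ^ k * (exp (-q * β) * β ^ k)) := by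
  have hrow : Summable fun k => a k * (exp (-q * β) * β ^ k * ((k + 1)! / p ^ (k + 2))) := by
    refine (hsum.mul_left q).of_nonneg_of_le (fun k => by have := ha k; positivity) fun k => ?_
    calc a k * (exp (-q * β) * β ^ k * ((k + 1)! / p ^ (k + 2)))
        ≤ a k * (k ! / q ^ k * ((k + 1)! / p ^ (k + 2))) := by
          have := ha k
          gcongr
          exact exp_neg_mul_mul_pow_le hq hβ.le k
      _ = _ := by field_simp; ring
  calc _ = ∫ α in Ioi 0, ∑' k,
          a k * (secrecyCapacity α β * (exp (-p * α) * α ^ k * (exp (-q * β) * β ^ k))) :=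
        integral_congr_ae <| ae_of_all _ fun α => by
          rw [← tsum_mul_left]
          exact tsum_congr fun k => mul_left_comm _ _ _
    _ = ∑' k, ∫ α in Ioi 0,
          a k * (secrecyCapacity α β * (exp (-p * α) * α ^ k * (exp (-q * β) * β ^ k))) := by
        refine integral_tsum_of_nonneg_of_le
          (h := fun k α => a k * (exp (-q * β) * β ^ k * (exp (-p * α) * α ^ (k + 1))))
          (fun k => ?_) (fun k => ?_) (fun k => ?_) (fun k => ?_) ?_
        · exact (((measurable_secrecyCapacity_mul p q k).comp
            measurable_prodMk_left).const_mul (a k)).aestronglyMeasurable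
        · exact ae_restrict_of_forall_mem measurableSet_Ioi fun α (hα : 0 < α) =>
            mul_nonneg (ha k) (mul_nonneg (secrecyCapacity_nonneg α β) (by positivity))
        · exact ae_restrict_of_forall_mem measurableSet_Ioi fun α (hα : 0 < α) =>
            mul_le_mul_of_nonneg_left (secrecyCapacity_mul_le hα.le hβ.le k) (ha k)
        · exact ((integrableOn_exp_neg_mul_mul_pow_Ioi hp (k + 1) le_rfl).const_mul _).const_mul _
        · simpa only [integral_const_mul, integral_exp_neg_mul_mul_pow_Ioi_zero hp] using hrow
    _ = _ := tsum_congr fun k => integral_const_mul _ _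

lemma integral_integral_secrecyCapacity_mul_tsum (hp : 0 < p) (hq : 0 < q) (ha : ∀ k, 0 ≤ a k)
    (hsum : Summable fun k => a k * (k ! / q ^ (k + 1) * ((k + 1)! / p ^ (k + 2)))) :
    ∫ β in Ioi 0, ∫ α in Ioi 0, secrecyCapacity α β *
        ∑' k, a k * (exp (-p * α) * α ^ k * (exp (-q * β) * β ^ k)) =
      ∑' k, a k * ∫ β in Ioi 0, ∫ α in Ioi 0,
        secrecyCapacity α β * (exp (-p * α) * α ^ k * (exp (-q * β) * β ^ k)) := by
  rw [setIntegral_congr_fun measurableSet_Ioi fun β (hβ : 0 < β) =>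
    integral_secrecyCapacity_mul_tsum hp hq ha hsum hβ]
  refine (integral_tsum_of_nonneg_of_le
    (h := fun k β => a k * (exp (-q * β) * β ^ k * ((k + 1)! / p ^ (k + 2))))
    (fun k => ?_) (fun k => ?_) (fun k => ?_) (fun k => ?_) ?_).trans
    (tsum_congr fun k => integral_const_mul _ _)
  · exact (measurable_secrecyCapacity_mul p q k).stronglyMeasurable.integral_prod_right'
      |>.aestronglyMeasurable.const_mul (a k)
  · exact ae_restrict_of_forall_mem measurableSet_Ioi fun β (hβ : 0 < β) =>
      mul_nonneg (ha k) (setIntegral_nonneg measurableSet_Ioi fun α (hα : 0 < α) =>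
        mul_nonneg (secrecyCapacity_nonneg α β) (by positivity))
  · exact ae_restrict_of_forall_mem measurableSet_Ioi fun β (hβ : 0 < β) =>
      mul_le_mul_of_nonneg_left (integral_secrecyCapacity_mul_le hp hβ.le k) (ha k)
  · exact ((integrableOn_exp_neg_mul_mul_pow_Ioi hq k le_rfl).mul_const _).const_mul _
  · simpa only [integral_const_mul, integral_mul_const, integral_exp_neg_mul_mul_pow_Ioi_zero hq]
      using hsum

end Interchange

section Scaling

variable {lam1 lam2 t : ℝ}

lemma bivariate_density_term_eq (hl1 : lam1 ≠ 0) (hl2 : lam2 ≠ 0) (c : ℝ) (k : ℕ) (α β : ℝ) :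
    c * (1 / (lam1 * lam2)) * exp (-(α / lam1 + β / lam2) / t) * (α / lam1) ^ k * (β / lam2) ^ k =
      c / (lam1 * lam2) ^ (k + 1) *
        (exp (-(1 / (lam1 * t)) * α) * α ^ k * (exp (-(1 / (lam2 * t)) * β) * β ^ k)) := by
  rw [show -(α / lam1 + β / lam2) / t = -(1 / (lam1 * t)) * α + -(1 / (lam2 * t)) * β by
    field_simp; ring, exp_add, div_pow, div_pow]
  field_simp
  ring

lemma density_coeff_mul_moment_eq (hl1 : lam1 ≠ 0) (hl2 : lam2 ≠ 0) (ht : t ≠ 0) (ρ : ℝ) (k : ℕ) :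
    ρ ^ k / ((k ! : ℝ) ^ 2 * t ^ (2 * k + 1)) / (lam1 * lam2) ^ (k + 1) *
        (k ! / (1 / (lam2 * t)) ^ (k + 1) * ((k + 1)! / (1 / (lam1 * t)) ^ (k + 2))) =
      lam1 * t ^ 2 * ((k + 1) * ρ ^ k) := by
  rw [Nat.factorial_succ]
  push_cast
  simp only [one_div, inv_pow, mul_pow]
  field_simp
  ring

lemma factorial_div_mul_integral_log_one_add_eq_F (hl1 : 0 < lam1) (k : ℕ) :
    k ! / (1 / (lam2 * t)) ^ (k + 1) *
        ∫ x in Ioi 0, log (1 + x) * (exp (-(1 / (lam1 * t)) * x) * x ^ k) =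
      (lam1 * lam2) ^ (k + 1) * (k ! * t ^ (k + 1) * F lam1 k (1 / t)) := by
  rw [integral_log_one_add_mul_exp_neg_mul_pow_eq_F hl1,
    show 1 / (lam1 * t) * lam1 = 1 / t by field_simp]
  simp only [one_div, inv_pow, mul_pow]
  field_simp

lemma integral_log_one_add_mul_expPowTail_mul_eq_F (hl1 : 0 < lam1) (hl2 : 0 < lam2) (ht : 0 < t)
    (k : ℕ) :
    ∫ x in Ioi 0, log (1 + x) *
        (expPowTail (1 / (lam2 * t)) k x * (exp (-(1 / (lam1 * t)) * x) * x ^ k)) =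
      (lam1 * lam2) ^ (k + 1) * (k ! * ∑ m ∈ Finset.range (k + 1),
        (lam1 / lam2) ^ m / m ! * t ^ (k + 1 - m) * F lam1 (k + m) ((1 + lam1 / lam2) / t)) := by
  rw [integral_log_one_add_mul_expPowTail_mul (by positivity) (by positivity), Finset.mul_sum,
    Finset.mul_sum]
  refine Finset.sum_congr rfl fun m hm => ?_
  have hm : m ≤ k + 1 := (Finset.mem_range.1 hm).le
  rw [integral_log_one_add_mul_exp_neg_mul_pow_eq_F hl1,
    show (1 / (lam2 * t) + 1 / (lam1 * t)) * lam1 = (1 + lam1 / lam2) / t by field_simp; ring,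
    pow_sub₀ _ (by positivity) hm, pow_sub₀ _ ht.ne' hm]
  simp only [one_div, inv_pow, mul_pow, div_pow]
  field_simp
  ring

end Scaling

lemma summable_add_one_mul_pow {ρ : ℝ} (hρ0 : 0 ≤ ρ) (hρ1 : ρ < 1) :
    Summable fun k : ℕ => ((k : ℝ) + 1) * ρ ^ k := by
  have hρ : ‖ρ‖ < 1 := by rwa [norm_of_nonneg hρ0]
  simpa [add_mul] using
    (summable_pow_mul_geometric_of_norm_lt_one 1 hρ).add (summable_geometric_of_norm_lt_one hρ)

/-- Theorem 1: closed form of the average secrecy capacity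
over the correlated Rayleigh fading wiretap channel. -/
theorem average_secrecy_capacity
    (lam1 lam2 ρ : ℝ) (hlam1 : 0 < lam1) (hlam2 : 0 < lam2)
    (hρ0 : 0 ≤ ρ) (hρ1 : ρ < 1) :
    ∫ β in Ioi (0:ℝ), ∫ α in Ioi (0:ℝ),
        max (Real.log (1 + α) - Real.log (1 + β)) 0 *
          ∑' k : ℕ, (ρ ^ k / ((k.factorial : ℝ) ^ 2 * (1 - ρ) ^ (2 * k + 1))) *
            (1 / (lam1 * lam2)) * Real.exp (-(α / lam1 + β / lam2) / (1 - ρ)) *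
            (α / lam1) ^ k * (β / lam2) ^ k =
      ∑' k : ℕ, (ρ ^ k / ((k.factorial : ℝ) ^ 2 * (1 - ρ) ^ (2 * k + 1))) *
        ((k.factorial : ℝ) * (1 - ρ) ^ (k + 1) * F lam1 k (1 / (1 - ρ)) -
          (k.factorial : ℝ) * ∑ m ∈ Finset.range (k + 1),
            ((lam1 / lam2) ^ m / (m.factorial : ℝ)) * (1 - ρ) ^ (k + 1 - m) *
              F lam1 (k + m) ((1 + lam1 / lam2) / (1 - ρ)) -
          (k.factorial : ℝ) * ∑ m ∈ Finset.range (k + 1),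
            ((lam2 / lam1) ^ m / (m.factorial : ℝ)) * (1 - ρ) ^ (k + 1 - m) *
              F lam2 (k + m) ((1 + lam2 / lam1) / (1 - ρ))) := by
  have ht : 0 < 1 - ρ := sub_pos.2 hρ1
  have hsum := (summable_add_one_mul_pow hρ0 hρ1).mul_left (lam1 * (1 - ρ) ^ 2)
  simp_rw [← density_coeff_mul_moment_eq hlam1.ne' hlam2.ne' ht.ne' ρ] at hsum
  simp_rw [bivariate_density_term_eq (t := 1 - ρ) hlam1.ne' hlam2.ne']
  refine (integral_integral_secrecyCapacity_mul_tsum (by positivity) (by positivity)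
    (fun k => by positivity) hsum).trans (tsum_congr fun k => ?_)
  rw [integral_integral_secrecyCapacity_mul (by positivity) (by positivity),
    factorial_div_mul_integral_log_one_add_eq_F hlam1,
    integral_log_one_add_mul_expPowTail_mul_eq_F hlam1 hlam2 ht,
    integral_log_one_add_mul_expPowTail_mul_eq_F hlam2 hlam1 ht, mul_comm lam2 lam1]
  field_simp
end
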